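/- For every s ∈ [0,1] and every N ∈ ℕ, inf_{P̂} sup_{P ∈ S(s)} P( TV(P, P̂(D_N(P))) ≥ s/2 ) ≥ 1/2, where the infimum is taken over all estimators P̂, i.e., over all measurable functions of the dataset D_N(P) with values in the probability distributions on Ω³, and TV denotes total variation distance TV(P,Q) = (1/2) Σ_w |P(w) − Q(w)|. -/

import Mathlib

/-!
Le Cam's two-point method. Let `P_σ` make `Y` uniform and independent of `(X, Z)`, with
`P(X = Z) = (1 + σ)/2`. Both pairwise marginals of `P_σ` are uniform whatever `σ`, so `P_s` and
`P_{-s}` generate the same distribution of the dataset, while `TV(P_s, P_{-s}) = s`. By the triangle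
inequality every estimate is at distance at least `s/2` from one of them, so the two failure
probabilities add up to at least `1`. Both lie in `S(s)`: `I(X;Z|Y) = 1 - h((1 + s)/2) ≤ s` by
convexity of `u ↦ u log u` on `[0, 2]`.
-/

open scoped Classical BigOperators

noncomputable section

/-- The binary alphabet Ω = {0,1}. -/
abbrev Om : Type := Bool

/-- Probability distributions on Ω³ (coordinates named (X, Y, Z)). -/
def Dist3 : Type := {p : Om × Om × Om → ℝ // (∀ w, 0 ≤ p w) ∧ ∑ w, p w = 1}

/-- Total variation distance `TV(P,Q) = (1/2) Σ_w |P(w) − Q(w)|`. -/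
def tvDist (p q : Om × Om × Om → ℝ) : ℝ :=
  (1 / 2) * ∑ w, |p w - q w|

/-- Conditional mutual information `I(X ; Z | Y)` (base-2 logarithms) of a joint
distribution `p` on Ω³ with coordinates ordered as (X, Y, Z). -/
def cmiXZ_Y (p : Om × Om × Om → ℝ) : ℝ :=
  ∑ x : Om, ∑ z : Om, ∑ y : Om,
    (if p (x, y, z) = 0 then 0
     else p (x, y, z) *
       Real.logb 2 ((p (x, y, z) * (∑ x' : Om, ∑ z' : Om, p (x', y, z'))) /
         ((∑ z' : Om, p (x, y, z')) * (∑ x' : Om, p (x', y, z)))))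

/-- The constrained class `S(s) = {P on Ω³ : I(X;Z|Y) ≤ s}`. -/
def Sclass (s : ℝ) : Set Dist3 := {P | cmiXZ_Y P.1 ≤ s}

/-- (X,Y)-marginal. -/
def margXY (p : Om × Om × Om → ℝ) : Om × Om → ℝ := fun w => ∑ z : Om, p (w.1, w.2, z)

/-- (Y,Z)-marginal. -/
def margYZ (p : Om × Om × Om → ℝ) : Om × Om → ℝ := fun w => ∑ x : Om, p (x, w.1, w.2)

/-- The dataset `D_N(P)`: `N` samples from the (X,Y)-marginal together with `N`
further samples from the (Y,Z)-marginal. -/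
def Dataset (N : ℕ) : Type := (Fin N → Om × Om) × (Fin N → Om × Om)

instance (N : ℕ) : Fintype (Dataset N) := by unfold Dataset; infer_instance

/-- The probability that a distribution `p` on Ω³ assigns to a realization `d` of the
dataset `D_N(p)` (all samples independent, the first `N` drawn from the (X,Y)-marginal
and the remaining `N` from the (Y,Z)-marginal). -/
def dataProb {N : ℕ} (p : Om × Om × Om → ℝ) (d : Dataset N) : ℝ :=
  (∏ i : Fin N, margXY p (d.1 i)) * (∏ i : Fin N, margYZ p (d.2 i))

/-- The probability, under the data-generating distribution `p`, of an event `E`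
depending on the dataset. -/
def dataEventProb {N : ℕ} (p : Om × Om × Om → ℝ) (E : Dataset N → Prop) : ℝ :=
  ∑ d : Dataset N, if E d then dataProb p d else 0


theorem tvDist_comm (p q : Om × Om × Om → ℝ) : tvDist p q = tvDist q p := by
  simp only [tvDist, abs_sub_comm]

theorem tvDist_triangle (p q r : Om × Om × Om → ℝ) : tvDist p r ≤ tvDist p q + tvDist q r := by
  have h : ∑ w, |p w - r w| ≤ ∑ w, (|p w - q w| + |q w - r w|) :=
    Finset.sum_le_sum fun w _ => abs_sub_le _ _ _
  rw [Finset.sum_add_distrib] at h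
  unfold tvDist
  linarith

section Dataset

variable {N : ℕ} {p q : Om × Om × Om → ℝ}

theorem sum_margXY (p : Om × Om × Om → ℝ) : ∑ v, margXY p v = ∑ w, p w := by
  simp only [margXY, Fintype.sum_prod_type]

theorem sum_margYZ (p : Om × Om × Om → ℝ) : ∑ v, margYZ p v = ∑ w, p w := by
  simp only [margYZ, Fintype.sum_prod_type, Fintype.sum_bool]
  ring

theorem dataProb_nonneg (hp : ∀ w, 0 ≤ p w) (d : Dataset N) : 0 ≤ dataProb p d :=
  mul_nonneg (Finset.prod_nonneg fun _ _ => Finset.sum_nonneg fun _ _ => hp _)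
    (Finset.prod_nonneg fun _ _ => Finset.sum_nonneg fun _ _ => hp _)

theorem sum_dataProb (hp : ∑ w, p w = 1) : ∑ d : Dataset N, dataProb p d = 1 := by
  calc ∑ d : Dataset N, dataProb p d = (∑ v, margXY p v) ^ N * (∑ v, margYZ p v) ^ N := by
        rw [Fintype.sum_pow, Fintype.sum_pow, Fintype.sum_mul_sum, ← Fintype.sum_prod_type']
        rfl
    _ = 1 := by rw [sum_margXY, sum_margYZ, hp, one_pow, one_mul]

theorem dataEventProb_le_one (hp₀ : ∀ w, 0 ≤ p w) (hp₁ : ∑ w, p w = 1) (E : Dataset N → Prop) :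
    dataEventProb p E ≤ 1 := by
  rw [← sum_dataProb (N := N) hp₁]
  exact Finset.sum_le_sum fun d _ => by split_ifs <;> simp [dataProb_nonneg hp₀ d]

theorem one_le_dataEventProb_add (hp₀ : ∀ w, 0 ≤ p w) (hp₁ : ∑ w, p w = 1)
    {E F : Dataset N → Prop} (hEF : ∀ d, E d ∨ F d) :
    1 ≤ dataEventProb p E + dataEventProb p F := by
  rw [← sum_dataProb (N := N) hp₁, dataEventProb, dataEventProb, ← Finset.sum_add_distrib]
  refine Finset.sum_le_sum fun d _ => ?_
  have := dataProb_nonneg hp₀ d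
  rcases hEF d with h | h <;> simp only [h, if_true] <;> split_ifs <;> linarith

theorem dataEventProb_congr_of_marg (hXY : margXY p = margXY q) (hYZ : margYZ p = margYZ q)
    (E : Dataset N → Prop) : dataEventProb p E = dataEventProb q E := by
  simp only [dataEventProb, dataProb, hXY, hYZ]

theorem one_le_dataEventProb_add_of_tvDist (hp₀ : ∀ w, 0 ≤ p w) (hp₁ : ∑ w, p w = 1)
    (hXY : margXY p = margXY q) (hYZ : margYZ p = margYZ q) {r : ℝ} (hpq : 2 * r ≤ tvDist p q)
    (est : Dataset N → Om × Om × Om → ℝ) :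
    1 ≤ dataEventProb p (fun d => r ≤ tvDist p (est d)) +
      dataEventProb q (fun d => r ≤ tvDist q (est d)) := by
  rw [← dataEventProb_congr_of_marg hXY hYZ]
  refine one_le_dataEventProb_add hp₀ hp₁ fun d => ?_
  by_contra! h
  linarith [tvDist_triangle p (est d) q, tvDist_comm (est d) q]

end Dataset

section AgreeDist

def agreeDist (σ : ℝ) : Om × Om × Om → ℝ :=
  fun w => if w.1 = w.2.2 then (1 + σ) / 8 else (1 - σ) / 8

variable {σ : ℝ}

theorem agreeDist_nonneg (hσ : |σ| ≤ 1) (w : Om × Om × Om) : 0 ≤ agreeDist σ w := by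
  obtain ⟨h₁, h₂⟩ := abs_le.1 hσ
  unfold agreeDist
  split_ifs <;> linarith

theorem sum_agreeDist (σ : ℝ) : ∑ w, agreeDist σ w = 1 := by
  simp only [agreeDist, Fintype.sum_prod_type, Fintype.sum_bool]
  norm_num
  ring

theorem sum_agreeDist_z (σ : ℝ) (x y : Om) : ∑ z, agreeDist σ (x, y, z) = 1 / 4 := by
  cases x <;> simp only [agreeDist, Fintype.sum_bool] <;> norm_num <;> ring

theorem sum_agreeDist_x (σ : ℝ) (y z : Om) : ∑ x, agreeDist σ (x, y, z) = 1 / 4 := by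
  cases z <;> simp only [agreeDist, Fintype.sum_bool] <;> norm_num <;> ring

theorem margXY_agreeDist (σ : ℝ) : margXY (agreeDist σ) = fun _ => 1 / 4 :=
  funext fun v => sum_agreeDist_z σ v.1 v.2

theorem margYZ_agreeDist (σ : ℝ) : margYZ (agreeDist σ) = fun _ => 1 / 4 :=
  funext fun v => sum_agreeDist_x σ v.1 v.2

theorem tvDist_agreeDist_neg {s : ℝ} (hs : 0 ≤ s) : tvDist (agreeDist s) (agreeDist (-s)) = s := by
  have h (w : Om × Om × Om) : |agreeDist s w - agreeDist (-s) w| = s / 4 := by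
    rw [abs_eq (by linarith)]
    unfold agreeDist
    split_ifs
    exacts [Or.inl (by ring), Or.inr (by ring)]
  simp only [tvDist, h, Finset.sum_const, Finset.card_univ, Fintype.card_prod, Fintype.card_bool]
  ring

theorem cmiXZ_Y_agreeDist (σ : ℝ) :
    cmiXZ_Y (agreeDist σ) =
      ((1 + σ) * Real.logb 2 (1 + σ) + (1 - σ) * Real.logb 2 (1 - σ)) / 2 := by
  have hY (y : Om) : ∑ x, ∑ z, agreeDist σ (x, y, z) = 1 / 2 := by
    simp only [sum_agreeDist_z]; norm_num
  have hterm (a : ℝ) :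
      (if a = 0 then 0 else a * Real.logb 2 (a * (1 / 2) / (1 / 4 * (1 / 4)))) =
        a * Real.logb 2 (8 * a) := by
    split_ifs with h
    · simp [h]
    · congr 2; ring
  simp only [cmiXZ_Y, hY]
  simp only [sum_agreeDist_z, sum_agreeDist_x, hterm]
  have h8 (a : ℝ) : 8 * (a / 8) = a := by ring
  simp only [agreeDist, Fintype.sum_bool, Bool.false_eq_true, Bool.true_eq_false, if_true, if_false, h8]
  ring

theorem mul_log_one_add_add_mul_log_one_sub_le {t : ℝ} (ht₀ : 0 ≤ t) (ht₁ : t ≤ 1) :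
    (1 + t) * Real.log (1 + t) + (1 - t) * Real.log (1 - t) ≤ 2 * t * Real.log 2 := by
  have hconv := Real.convexOn_mul_log.2 (Set.mem_Ici.2 zero_le_one)
  have hup := hconv (Set.mem_Ici.2 zero_le_two) (by linarith) ht₀ (sub_add_cancel 1 t)
  have hdown := hconv (Set.mem_Ici.2 le_rfl) (by linarith) ht₀ (sub_add_cancel 1 t)
  simp only [smul_eq_mul, mul_one, mul_zero, add_zero, Real.log_one, Real.log_zero] at hup hdown
  rw [show 1 - t + t * 2 = 1 + t by ring] at hup
  linarith

theorem cmiXZ_Y_agreeDist_le (hσ : |σ| ≤ 1) : cmiXZ_Y (agreeDist σ) ≤ |σ| := by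
  have key := mul_log_one_add_add_mul_log_one_sub_le (abs_nonneg σ) hσ
  have hsymm : (1 + |σ|) * Real.log (1 + |σ|) + (1 - |σ|) * Real.log (1 - |σ|) =
      (1 + σ) * Real.log (1 + σ) + (1 - σ) * Real.log (1 - σ) := by
    rcases abs_choice σ with h | h
    · rw [h]
    · rw [h, ← sub_eq_add_neg, sub_neg_eq_add, add_comm]
  rw [hsymm] at key
  rw [cmiXZ_Y_agreeDist, Real.logb, Real.logb, div_le_iff₀ two_pos]
  calc (1 + σ) * (Real.log (1 + σ) / Real.log 2) + (1 - σ) * (Real.log (1 - σ) / Real.log 2)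
      = ((1 + σ) * Real.log (1 + σ) + (1 - σ) * Real.log (1 - σ)) / Real.log 2 := by ring
    _ ≤ |σ| * 2 := by rw [div_le_iff₀ (Real.log_pos one_lt_two)]; linarith

end AgreeDist

/-- **Theorem 2 of the paper (total-variation version).**  For every `s ∈ [0,1]`,
every `N`, and every estimator `P̂` (an arbitrary function of the dataset valued in
distributions on Ω³), the worst-case probability over `P ∈ S(s)` that
`TV(P, P̂(D_N(P))) ≥ s/2` is at least `1/2`. -/
theorem memory_bottleneck_lower_bound_TV
    (s : ℝ) (hs : s ∈ Set.Icc (0 : ℝ) 1) (N : ℕ)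
    (est : Dataset N → Dist3) :
    (1 : ℝ) / 2 ≤
      sSup {r : ℝ | ∃ P ∈ Sclass s,
        r = dataEventProb P.1
              (fun d => s / 2 ≤ tvDist P.1 (est d).1)} := by
  obtain ⟨hs₀, hs₁⟩ := hs
  set failureProbs := {r : ℝ | ∃ P ∈ Sclass s,
    r = dataEventProb P.1 (fun d => s / 2 ≤ tvDist P.1 (est d).1)}
  have hbdd : BddAbove failureProbs := ⟨1, by
    rintro r ⟨P, -, rfl⟩
    exact dataEventProb_le_one P.2.1 P.2.2 _⟩
  have hmem {σ : ℝ} (hσ : |σ| = s) :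
      dataEventProb (agreeDist σ) (fun d => s / 2 ≤ tvDist (agreeDist σ) (est d).1) ∈
        failureProbs :=
    ⟨⟨agreeDist σ, agreeDist_nonneg (hσ.trans_le hs₁), sum_agreeDist σ⟩,
      hσ ▸ cmiXZ_Y_agreeDist_le (hσ.trans_le hs₁), rfl⟩
  have hs : |s| = s := abs_of_nonneg hs₀
  have hcover := one_le_dataEventProb_add_of_tvDist (q := agreeDist (-s)) (r := s / 2)
    (agreeDist_nonneg (hs.trans_le hs₁)) (sum_agreeDist s)
    (by rw [margXY_agreeDist, margXY_agreeDist]) (by rw [margYZ_agreeDist, margYZ_agreeDist])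
    (by rw [tvDist_agreeDist_neg hs₀]; linarith) (fun d => (est d).1)
  linarith [le_csSup hbdd (hmem hs), le_csSup hbdd (hmem ((abs_neg s).trans hs))]
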